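/- If X, Y ∈ M_n(ℂ) are accretive-dissipative, then ω(X ∘ Y) ≤ 2 min{ (max_j |x_jj|) ω(Y), (max_j |y_jj|) ω(X) }, where x_jj, y_jj are the diagonal entries. -/

import Mathlib

/-!
If `A = Cᴴ C` is positive semidefinite, then `x* (A ∘ Y) x = ∑ₖ (cₖ ∘ x)* Y (cₖ ∘ x)` with `cₖ` the
rows of `C`, hence `|x* (A ∘ Y) x| ≤ ω(Y) ∑ᵢ aᵢᵢ |xᵢ|² ≤ (maxᵢ aᵢᵢ) ω(Y)` for a unit vector `x`.
An accretive-dissipative `X` splits as `Re X + i Im X` with both parts positive semidefinite and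
with diagonals `Re xⱼⱼ`, `Im xⱼⱼ`, both bounded by `|xⱼⱼ|`; subadditivity of `ω` then gives
`ω(X ∘ Y) ≤ 2 (maxⱼ |xⱼⱼ|) ω(Y)`, and the other bound follows since `∘` is commutative.
-/

open Matrix Complex
open scoped ComplexOrder

/-- Hermitian real part `(X + Xᴴ)/2`. -/
noncomputable def reM {m : ℕ} (X : Matrix (Fin m) (Fin m) ℂ) : Matrix (Fin m) (Fin m) ℂ :=
  (1 / 2 : ℂ) • (X + Xᴴ)

/-- Hermitian imaginary part `(X - Xᴴ)/(2i)`. -/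
noncomputable def imM {m : ℕ} (X : Matrix (Fin m) (Fin m) ℂ) : Matrix (Fin m) (Fin m) ℂ :=
  (-Complex.I / 2) • (X - Xᴴ)

/-- Numerical range `W(X) = {⟨Xx, x⟩ : ‖x‖ = 1}`. -/
noncomputable def numRange {m : ℕ} (X : Matrix (Fin m) (Fin m) ℂ) : Set ℂ :=
  {z | ∃ x : EuclideanSpace ℂ (Fin m), ‖x‖ = 1 ∧ z = star (x : Fin m → ℂ) ⬝ᵥ X.mulVec x}

/-- Numerical radius `ω(X) = sup {|z| : z ∈ W(X)}`. -/
noncomputable def numRadius {m : ℕ} (X : Matrix (Fin m) (Fin m) ℂ) : ℝ :=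
  sSup ((fun z : ℂ => ‖z‖) '' numRange X)

/-- The sector `S_α`. -/
def sector (α : ℝ) : Set ℂ := {z : ℂ | 0 < z.re ∧ |z.im| ≤ Real.tan α * z.re}

/-- Operator norm of a matrix acting on Euclidean space. -/
noncomputable def opNorm {m : ℕ} (X : Matrix (Fin m) (Fin m) ℂ) : ℝ :=
  ‖Matrix.toEuclideanCLM (𝕜 := ℂ) X‖

section NumericalRadius

variable {n : ℕ}

lemma star_dotProduct_mulVec_eq_inner (Y : Matrix (Fin n) (Fin n) ℂ)
    (x : EuclideanSpace ℂ (Fin n)) :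
    star x.ofLp ⬝ᵥ Y *ᵥ x.ofLp = inner ℂ x (toEuclideanCLM (𝕜 := ℂ) Y x) := by
  rw [EuclideanSpace.inner_eq_star_dotProduct, ofLp_toEuclideanCLM, dotProduct_comm]

lemma norm_star_dotProduct_mulVec_le_opNorm (Y : Matrix (Fin n) (Fin n) ℂ)
    (x : EuclideanSpace ℂ (Fin n)) :
    ‖star x.ofLp ⬝ᵥ Y *ᵥ x.ofLp‖ ≤ opNorm Y * ‖x‖ ^ 2 := by
  rw [star_dotProduct_mulVec_eq_inner]
  calc _ ≤ ‖x‖ * ‖toEuclideanCLM (𝕜 := ℂ) Y x‖ := norm_inner_le_norm _ _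
    _ ≤ ‖x‖ * (opNorm Y * ‖x‖) := by gcongr; exact ContinuousLinearMap.le_opNorm _ _
    _ = opNorm Y * ‖x‖ ^ 2 := by ring

lemma bddAbove_norm_numRange (Y : Matrix (Fin n) (Fin n) ℂ) :
    BddAbove ((‖·‖) '' numRange Y) := by
  refine ⟨opNorm Y, ?_⟩
  rintro _ ⟨_, ⟨x, hx, rfl⟩, rfl⟩
  simpa [hx] using norm_star_dotProduct_mulVec_le_opNorm Y x

lemma numRadius_nonneg (Y : Matrix (Fin n) (Fin n) ℂ) : 0 ≤ numRadius Y :=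
  Real.sSup_nonneg (by rintro _ ⟨z, _, rfl⟩; exact norm_nonneg z)

lemma norm_star_dotProduct_mulVec_le_numRadius (Y : Matrix (Fin n) (Fin n) ℂ)
    {x : EuclideanSpace ℂ (Fin n)} (hx : ‖x‖ = 1) :
    ‖star x.ofLp ⬝ᵥ Y *ᵥ x.ofLp‖ ≤ numRadius Y :=
  le_csSup (bddAbove_norm_numRange Y) ⟨_, ⟨x, hx, rfl⟩, rfl⟩

lemma numRadius_le {Y : Matrix (Fin n) (Fin n) ℂ} {c : ℝ} (hc : 0 ≤ c)
    (h : ∀ x : EuclideanSpace ℂ (Fin n), ‖x‖ = 1 → ‖star x.ofLp ⬝ᵥ Y *ᵥ x.ofLp‖ ≤ c) :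
    numRadius Y ≤ c :=
  Real.sSup_le (by rintro _ ⟨_, ⟨x, hx, rfl⟩, rfl⟩; exact h x hx) hc

lemma norm_star_dotProduct_mulVec_smul (Y : Matrix (Fin n) (Fin n) ℂ) (c : ℂ)
    (x : EuclideanSpace ℂ (Fin n)) :
    ‖star (c • x).ofLp ⬝ᵥ Y *ᵥ (c • x).ofLp‖ = ‖c‖ ^ 2 * ‖star x.ofLp ⬝ᵥ Y *ᵥ x.ofLp‖ := by
  rw [WithLp.ofLp_smul, star_smul, mulVec_smul, dotProduct_smul, smul_dotProduct, smul_eq_mul,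
    smul_eq_mul, norm_mul, norm_mul, norm_star]
  ring

lemma norm_star_dotProduct_mulVec_le_numRadius_mul (Y : Matrix (Fin n) (Fin n) ℂ)
    (x : EuclideanSpace ℂ (Fin n)) :
    ‖star x.ofLp ⬝ᵥ Y *ᵥ x.ofLp‖ ≤ numRadius Y * ‖x‖ ^ 2 := by
  rcases eq_or_ne x 0 with rfl | hx
  · simp
  have hx' : 0 < ‖x‖ := norm_pos_iff.mpr hx
  have hunit : ‖((‖x‖⁻¹ : ℝ) : ℂ) • x‖ = 1 := by
    rw [norm_smul, Complex.norm_real, norm_inv, norm_norm, inv_mul_cancel₀ hx'.ne']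
  have h := norm_star_dotProduct_mulVec_le_numRadius Y hunit
  rw [norm_star_dotProduct_mulVec_smul, Complex.norm_real, norm_inv, norm_norm, inv_pow] at h
  rwa [inv_mul_le_iff₀ (by positivity), mul_comm] at h

lemma numRadius_add_le (A B : Matrix (Fin n) (Fin n) ℂ) :
    numRadius (A + B) ≤ numRadius A + numRadius B := by
  refine numRadius_le (add_nonneg (numRadius_nonneg A) (numRadius_nonneg B)) fun x hx => ?_
  rw [add_mulVec, dotProduct_add]
  exact (norm_add_le _ _).trans (add_le_add (norm_star_dotProduct_mulVec_le_numRadius A hx)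
    (norm_star_dotProduct_mulVec_le_numRadius B hx))

lemma numRadius_smul_le (c : ℂ) (A : Matrix (Fin n) (Fin n) ℂ) :
    numRadius (c • A) ≤ ‖c‖ * numRadius A := by
  refine numRadius_le (mul_nonneg (norm_nonneg c) (numRadius_nonneg A)) fun x hx => ?_
  rw [smul_mulVec, dotProduct_smul, smul_eq_mul, norm_mul]
  exact mul_le_mul_of_nonneg_left (norm_star_dotProduct_mulVec_le_numRadius A hx) (norm_nonneg c)

end NumericalRadius

section HadamardProduct

variable {ι κ R : Type*} [Fintype κ]

lemma star_dotProduct_hadamard_conjTranspose_mul_mulVec [Fintype ι] [CommSemiring R] [StarRing R]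
    (C : Matrix κ ι R) (Y : Matrix ι ι R) (v : ι → R) :
    star v ⬝ᵥ ((Cᴴ * C) ⊙ Y) *ᵥ v = ∑ k, star (C k * v) ⬝ᵥ Y *ᵥ (C k * v) := by
  simp only [dotProduct, mulVec, hadamard_apply, mul_apply, conjTranspose_apply, Pi.star_apply,
    Pi.mul_apply, star_mul', Finset.mul_sum, Finset.sum_mul]
  rw [Finset.sum_comm_cycle]
  refine Finset.sum_congr rfl fun k _ => Finset.sum_congr rfl fun i _ =>
    Finset.sum_congr rfl fun j _ => by ring

lemma re_conjTranspose_mul_self_apply_self (C : Matrix κ ι ℂ) (i : ι) :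
    ((Cᴴ * C) i i).re = ∑ k, ‖C k i‖ ^ 2 := by
  simp only [mul_apply, conjTranspose_apply, Complex.re_sum, RCLike.star_def,
    ← Complex.normSq_eq_conj_mul_self, Complex.ofReal_re, Complex.sq_norm]

end HadamardProduct

section HadamardNumericalRadius

variable {n : ℕ}

open scoped MatrixOrder in
lemma numRadius_hadamard_le_of_posSemidef {A : Matrix (Fin n) (Fin n) ℂ} (hA : A.PosSemidef)
    (Y : Matrix (Fin n) (Fin n) ℂ) :
    numRadius (A ⊙ Y) ≤ (⨆ i, (A i i).re) * numRadius Y := by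
  obtain ⟨C, rfl⟩ := CStarAlgebra.nonneg_iff_eq_star_mul_self.mp hA.nonneg
  rw [star_eq_conjTranspose]
  set M := ⨆ i, ((Cᴴ * C) i i).re
  have hM : ∀ i, ((Cᴴ * C) i i).re ≤ M := le_ciSup (Finite.bddAbove_range _)
  have hM₀ : 0 ≤ M := Real.iSup_nonneg fun i => by
    rw [re_conjTranspose_mul_self_apply_self]; positivity
  refine numRadius_le (mul_nonneg hM₀ (numRadius_nonneg Y)) fun x hx => ?_
  calc ‖star x.ofLp ⬝ᵥ ((Cᴴ * C) ⊙ Y) *ᵥ x.ofLp‖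
      = ‖∑ k, star (C k * x.ofLp) ⬝ᵥ Y *ᵥ (C k * x.ofLp)‖ := by
        rw [star_dotProduct_hadamard_conjTranspose_mul_mulVec]
    _ ≤ ∑ k, numRadius Y * ∑ i, ‖C k i * x i‖ ^ 2 :=
        (norm_sum_le _ _).trans <| Finset.sum_le_sum fun k _ => by
          simpa [EuclideanSpace.norm_sq_eq] using
            norm_star_dotProduct_mulVec_le_numRadius_mul Y (WithLp.toLp 2 (C k * x.ofLp))
    _ = numRadius Y * ∑ i, ((Cᴴ * C) i i).re * ‖x i‖ ^ 2 := by
        simp_rw [← Finset.mul_sum, re_conjTranspose_mul_self_apply_self, Finset.sum_mul, norm_mul,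
          mul_pow]
        rw [Finset.sum_comm]
    _ ≤ numRadius Y * ∑ i, M * ‖x i‖ ^ 2 := by
        gcongr with i
        · exact numRadius_nonneg Y
        · exact hM i
    _ = M * numRadius Y := by
        rw [← Finset.mul_sum, ← EuclideanSpace.norm_sq_eq, hx]; ring

lemma reM_add_I_smul_imM (X : Matrix (Fin n) (Fin n) ℂ) : reM X + I • imM X = X := by
  ext i j
  simp only [reM, imM, Matrix.add_apply, Matrix.smul_apply, Matrix.sub_apply, smul_eq_mul]
  linear_combination (Xᴴ i j - X i j) / 2 * I_sq

lemma re_reM_apply_self (X : Matrix (Fin n) (Fin n) ℂ) (i : Fin n) :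
    (reM X i i).re = (X i i).re := by
  simp only [reM, Matrix.smul_apply, Matrix.add_apply, conjTranspose_apply, RCLike.star_def,
    add_conj, smul_eq_mul]
  norm_num [← mul_assoc]

lemma re_imM_apply_self (X : Matrix (Fin n) (Fin n) ℂ) (i : Fin n) :
    (imM X i i).re = (X i i).im := by
  simp only [imM, Matrix.smul_apply, Matrix.sub_apply, conjTranspose_apply, RCLike.star_def,
    sub_conj, smul_eq_mul]
  norm_num [mul_re, ← mul_assoc]

lemma numRadius_hadamard_le_two_mul {X : Matrix (Fin n) (Fin n) ℂ} (hre : (reM X).PosSemidef)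
    (him : (imM X).PosSemidef) (Y : Matrix (Fin n) (Fin n) ℂ) :
    numRadius (X ⊙ Y) ≤ 2 * ((⨆ j, ‖X j j‖) * numRadius Y) := by
  have diag_le {A : Matrix (Fin n) (Fin n) ℂ} (h : ∀ i, (A i i).re ≤ ‖X i i‖) :
      (⨆ i, (A i i).re) * numRadius Y ≤ (⨆ j, ‖X j j‖) * numRadius Y :=
    mul_le_mul_of_nonneg_right (ciSup_mono (Finite.bddAbove_range _) h) (numRadius_nonneg Y)
  calc numRadius (X ⊙ Y) = numRadius (reM X ⊙ Y + I • (imM X ⊙ Y)) := by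
        rw [← smul_hadamard, ← add_hadamard, reM_add_I_smul_imM]
    _ ≤ numRadius (reM X ⊙ Y) + ‖I‖ * numRadius (imM X ⊙ Y) :=
        (numRadius_add_le _ _).trans (add_le_add_right (numRadius_smul_le I _) _)
    _ = numRadius (reM X ⊙ Y) + numRadius (imM X ⊙ Y) := by rw [norm_I, one_mul]
    _ ≤ (⨆ i, (reM X i i).re) * numRadius Y + (⨆ i, (imM X i i).re) * numRadius Y :=
        add_le_add (numRadius_hadamard_le_of_posSemidef hre Y)
          (numRadius_hadamard_le_of_posSemidef him Y)
    _ ≤ (⨆ j, ‖X j j‖) * numRadius Y + (⨆ j, ‖X j j‖) * numRadius Y :=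
        add_le_add (diag_le fun i => (re_reM_apply_self X i).trans_le (re_le_norm _))
          (diag_le fun i => (re_imM_apply_self X i).trans_le (im_le_norm _))
    _ = 2 * ((⨆ j, ‖X j j‖) * numRadius Y) := by ring

end HadamardNumericalRadius

theorem numRadius_hadamard_le_diag_of_accretiveDissipative {n : ℕ}
    (X Y : Matrix (Fin n) (Fin n) ℂ)
    (hX₁ : (reM X).PosDef) (hX₂ : (imM X).PosDef)
    (hY₁ : (reM Y).PosDef) (hY₂ : (imM Y).PosDef) :
    numRadius (X ⊙ Y) ≤ 2 *
      min ((⨆ j, ‖X j j‖) * numRadius Y)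
          ((⨆ j, ‖Y j j‖) * numRadius X) := by
  rw [mul_min_of_nonneg _ _ zero_le_two]
  exact le_min (numRadius_hadamard_le_two_mul hX₁.posSemidef hX₂.posSemidef Y)
    (hadamard_comm X Y ▸ numRadius_hadamard_le_two_mul hY₁.posSemidef hY₂.posSemidef X)
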